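/- arXiv:1011.4763 — 4 statements merged into one kernel-verified Lean document; each statement's English description precedes it below -/
import Mathlib

section
/- For the system of independent r_j-random walks starting from every point of Ω_M, the variance of N_n(L) satisfies Var N_n(L) ∼ 2n M^L P(|ρ| > L) as L → ∞ (for fixed n ≥ 1). -/
open MeasureTheory Filter
open scoped ENNReal NNReal BigOperators Topology

noncomputable section

/-- The hierarchical group of order `M`: finitely supported sequences with entries in `ZMod M`,
with componentwise addition mod `M`. -/
abbrev Omega (M : ℕ) := ℕ →₀ ZMod M

/-- The hierarchical norm: `|x| = max {i : x_i ≠ 0}` (coordinates indexed from 1), `|0| = 0`. -/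
def hnorm {M : ℕ} (x : Omega M) : ℕ := x.support.sup (· + 1)

instance {M : ℕ} : MeasurableSpace (Omega M) := ⊤

/-- The `n`-step distribution of the random walk with step distribution `ρ`, started at `0`. -/
def walk {M : ℕ} (ρ : PMF (Omega M)) : ℕ → PMF (Omega M)
  | 0 => PMF.pure 0
  | n + 1 => (walk ρ n).bind fun x => ρ.map (x + ·)

/-!
The ball `B_L = {|x| ≤ L}` is a subgroup of `Ω_M` of order `M^L`, and `u + ξ_n ∈ B_L` only
depends on the coset of `-u`. Summing over cosets, `Var N_n(L) = M^L Σ_c q_c (1 - q_c)` where `q`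
is the law of `ξ_n` modulo `B_L`. With `e = P(ξ_n ∉ B_L) = 1 - q_0`, an elementary estimate gives
`2 e (1 - e) ≤ Σ_c q_c (1 - q_c) ≤ 2 e`. A step from a point of `B_L` leaves `B_L` with probability
`δ = P(ρ ∉ B_L)`, and a step from outside `B_L` enters it with probability at most `δ`, so
`n δ - (n δ)² ≤ e ≤ n δ`. As `δ → 0` when `L → ∞`, `Var N_n(L) ∼ 2 n M^L δ`.
-/

namespace PMF

variable {α : Type*} (q : PMF α)

/-- `∑ₐ q a (1 - q a)`: the probability that two independent samples of `q` differ. -/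
def mismatchProb : ℝ := ∑' a, (q a).toReal * (1 - (q a).toReal)

theorem hasSum_toReal : HasSum (fun a => (q a).toReal) 1 := by
  have h := ENNReal.hasSum_toReal (q.tsum_coe ▸ ENNReal.one_ne_top)
  rwa [← ENNReal.tsum_toReal_eq q.apply_ne_top, q.tsum_coe, ENNReal.toReal_one] at h

theorem toReal_apply_le_one (a : α) : (q a).toReal ≤ 1 :=
  ENNReal.toReal_le_of_le_ofReal zero_le_one (by simpa using q.coe_le_one a)

theorem toReal_add_toReal_le_one {a c : α} (hc : c ≠ a) : (q c).toReal + (q a).toReal ≤ 1 := by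
  classical
  simpa [Finset.sum_pair hc] using
    sum_le_hasSum {c, a} (fun _ _ => ENNReal.toReal_nonneg) q.hasSum_toReal

theorem toReal_mul_one_sub_toReal (a : α) :
    (q a * (1 - q a)).toReal = (q a).toReal * (1 - (q a).toReal) := by
  rw [ENNReal.toReal_mul, ENNReal.toReal_sub_of_le (q.coe_le_one a) ENNReal.one_ne_top,
    ENNReal.toReal_one]

theorem hasSum_mismatchProb :
    HasSum (fun a => (q a).toReal * (1 - (q a).toReal)) q.mismatchProb := by
  refine (q.hasSum_toReal.summable.of_nonneg_of_le (fun a => ?_) fun a => ?_).hasSum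
  · rw [← toReal_mul_one_sub_toReal]
    exact ENNReal.toReal_nonneg
  · nlinarith [ENNReal.toReal_nonneg (a := q a), q.toReal_apply_le_one a]

theorem mismatchProb_le (a : α) : q.mismatchProb ≤ 2 * (1 - (q a).toReal) := by
  classical
  have hupd := q.hasSum_toReal.update a (1 - (q a).toReal)
  rw [show 1 - (q a).toReal - (q a).toReal + 1 = 2 * (1 - (q a).toReal) by ring] at hupd
  refine hasSum_le (fun c => ?_) q.hasSum_mismatchProb hupd
  rcases eq_or_ne c a with rfl | hc
  · simp only [Function.update_self]
    nlinarith [sq_nonneg (1 - (q c).toReal)]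
  · simp only [Function.update_of_ne hc]
    nlinarith [sq_nonneg (q c).toReal]

/-- For `c ≠ a` we have `1 - q c ≥ q a`, so the terms off `a` contribute at least
`q a * (1 - q a)`. -/
theorem two_mul_mul_one_sub_le_mismatchProb (a : α) :
    2 * (q a).toReal * (1 - (q a).toReal) ≤ q.mismatchProb := by
  classical
  have hupd := (q.hasSum_toReal.mul_right (q a).toReal).update a
    ((q a).toReal * (1 - (q a).toReal))
  rw [show (q a).toReal * (1 - (q a).toReal) - (q a).toReal * (q a).toReal + 1 * (q a).toReal =
    2 * (q a).toReal * (1 - (q a).toReal) by ring] at hupd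
  refine hasSum_le (fun c => ?_) hupd q.hasSum_mismatchProb
  rcases eq_or_ne c a with rfl | hc
  · simp
  · simp only [Function.update_of_ne hc]
    nlinarith [ENNReal.toReal_nonneg (a := q c), q.toReal_add_toReal_le_one hc]

end PMF

theorem AddSubgroup.tsum_comp_mk {G : Type*} [AddGroup G] (B : AddSubgroup G)
    (F : G ⧸ B → ℝ≥0∞) :
    ∑' u, F (QuotientAddGroup.mk u) = ENat.card B * ∑' c, F c := by
  rw [← ENNReal.tsum_fiberwise _ (QuotientAddGroup.mk : G → G ⧸ B), ← ENNReal.tsum_mul_left]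
  refine tsum_congr fun c => ?_
  have hfiber : ∀ u : (QuotientAddGroup.mk : G → G ⧸ B) ⁻¹' {c},
      F (QuotientAddGroup.mk u) = F c :=
    fun u => congrArg F u.2
  rw [tsum_congr hfiber, ENNReal.tsum_const,
    ENat.card_congr (QuotientAddGroup.preimageMkEquivAddSubgroupProdSet B {c})]
  simp

namespace PMF

section Cosets

variable {G : Type*} [AddGroup G] [MeasurableSpace G] [MeasurableSingletonClass G]
  (p : PMF G) (B : AddSubgroup G)

theorem toMeasure_add_mem (u : G) :
    p.toMeasure {x | u + x ∈ B} = p.map (QuotientAddGroup.mk : G → G ⧸ B) (-u : G) := by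
  have hcoset : {x | u + x ∈ B} =
      (QuotientAddGroup.mk : G → G ⧸ B) ⁻¹' {((-u : G) : G ⧸ B)} := by
    ext x
    simp [QuotientAddGroup.eq, ← neg_add_rev]
  rw [toMeasure_apply_eq_toOuterMeasure, hcoset, ← toOuterMeasure_map_apply,
    toOuterMeasure_apply_singleton]

theorem tsum_measureReal_add_mem_mul_one_sub [Finite B] :
    ∑' u, p.toMeasure.real {x | u + x ∈ B} * (1 - p.toMeasure.real {x | u + x ∈ B}) =
      Nat.card B * (p.map (QuotientAddGroup.mk : G → G ⧸ B)).mismatchProb := by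
  set q := p.map (QuotientAddGroup.mk : G → G ⧸ B)
  have hfin : ∀ c, q c * (1 - q c) ≠ ∞ := fun c =>
    ENNReal.mul_ne_top (q.apply_ne_top c) (ENNReal.sub_ne_top ENNReal.one_ne_top)
  calc ∑' u, p.toMeasure.real {x | u + x ∈ B} * (1 - p.toMeasure.real {x | u + x ∈ B})
      = (∑' u : G, q (-u : G) * (1 - q (-u : G))).toReal := by
        simp_rw [measureReal_def, toMeasure_add_mem, ← toReal_mul_one_sub_toReal]
        exact (ENNReal.tsum_toReal_eq fun u => hfin _).symm
    _ = (∑' u : G, q u * (1 - q u)).toReal :=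
        congrArg _ ((Equiv.neg G).tsum_eq fun u : G => q u * (1 - q u))
    _ = Nat.card B * q.mismatchProb := by
        rw [AddSubgroup.tsum_comp_mk B fun c => q c * (1 - q c), ENat.card_eq_coe_natCard,
          ENat.toENNReal_coe, ENNReal.toReal_mul, ENNReal.tsum_toReal_eq hfin]
        simp_rw [toReal_mul_one_sub_toReal]
        simp [mismatchProb]

end Cosets

section Escape

variable {G : Type*} [AddGroup G] [MeasurableSpace G] [DiscreteMeasurableSpace G]
  (p ρ : PMF G) (B : AddSubgroup G)

theorem toReal_map_mk_zero :
    (p.map (QuotientAddGroup.mk : G → G ⧸ B) (0 : G)).toReal = 1 - p.toMeasure.real (↑B)ᶜ := by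
  have h := toMeasure_add_mem p B 0
  simp only [zero_add, neg_zero, SetLike.setOfPred_mem_eq] at h
  rw [← h, probReal_compl_eq_one_sub (.of_discrete), sub_sub_cancel, measureReal_def]

theorem one_sub_le_toMeasure_preimage_add_compl_of_notMem {x : G} (hx : x ∉ B) :
    1 - ρ.toMeasure (↑B)ᶜ ≤ ρ.toMeasure ((x + ·) ⁻¹' (↑B)ᶜ) := by
  have hsub : (x + ·) ⁻¹' (↑B : Set G) ⊆ (↑B)ᶜ := fun y hxy hy =>
    hx (by simpa using B.sub_mem hxy hy)
  rw [Set.preimage_compl,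
    prob_compl_eq_one_sub (μ := ρ.toMeasure) (s := (x + ·) ⁻¹' ↑B) (.of_discrete)]
  exact tsub_le_tsub_left (measure_mono (μ := ρ.toMeasure) hsub) 1

theorem toMeasure_bind_add_compl :
    (p.bind fun x => ρ.map (x + ·)).toMeasure (↑B)ᶜ =
      p.toMeasure ↑B * ρ.toMeasure (↑B)ᶜ +
        ∑' x : ↥(↑B : Set G)ᶜ, p x * ρ.toMeasure ((x + ·) ⁻¹' (↑B)ᶜ) := by
  have hmem : ∀ x ∈ B, (x + ·) ⁻¹' (↑B : Set G)ᶜ = (↑B)ᶜ := fun x hx => by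
    ext y
    simp [B.add_mem_cancel_left hx]
  rw [toMeasure_bind_apply _ _ _ (.of_discrete),
    ← ENNReal.summable.tsum_add_tsum_compl (s := (B : Set G)) ENNReal.summable,
    toMeasure_apply_eq_tsum, ← tsum_subtype, ← ENNReal.tsum_mul_right]
  congr 1 <;> refine tsum_congr fun x => ?_ <;>
    rw [toMeasure_map_apply _ _ _ (.of_discrete) (.of_discrete)]
  rw [hmem x x.2]

theorem measureReal_bind_add_compl_le :
    (p.bind fun x => ρ.map (x + ·)).toMeasure.real (↑B)ᶜ ≤
      ρ.toMeasure.real (↑B)ᶜ + p.toMeasure.real (↑B)ᶜ := by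
  have h : (p.bind fun x => ρ.map (x + ·)).toMeasure (↑B)ᶜ ≤
      ρ.toMeasure (↑B)ᶜ + p.toMeasure (↑B)ᶜ := by
    rw [toMeasure_bind_add_compl, toMeasure_apply_eq_tsum p (↑B)ᶜ, ← tsum_subtype]
    calc p.toMeasure ↑B * ρ.toMeasure (↑B)ᶜ +
          ∑' x : ↥(↑B : Set G)ᶜ, p x * ρ.toMeasure ((x + ·) ⁻¹' (↑B)ᶜ)
        ≤ 1 * ρ.toMeasure (↑B)ᶜ + ∑' x : ↥(↑B : Set G)ᶜ, p x * 1 := by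
          gcongr
          · exact prob_le_one
          · exact prob_le_one
      _ = ρ.toMeasure (↑B)ᶜ + ∑' x : ↥(↑B : Set G)ᶜ, p x := by simp
  simpa only [measureReal_def, ENNReal.toReal_add (measure_ne_top _ _) (measure_ne_top _ _)]
    using ENNReal.toReal_mono (by finiteness) h

theorem le_measureReal_bind_add_compl :
    ρ.toMeasure.real (↑B)ᶜ + (1 - 2 * ρ.toMeasure.real (↑B)ᶜ) * p.toMeasure.real (↑B)ᶜ ≤
      (p.bind fun x => ρ.map (x + ·)).toMeasure.real (↑B)ᶜ := by
  have h : p.toMeasure ↑B * ρ.toMeasure (↑B)ᶜ + p.toMeasure (↑B)ᶜ * (1 - ρ.toMeasure (↑B)ᶜ) ≤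
      (p.bind fun x => ρ.map (x + ·)).toMeasure (↑B)ᶜ := by
    rw [toMeasure_bind_add_compl, toMeasure_apply_eq_tsum p (↑B)ᶜ, ← tsum_subtype,
      ← ENNReal.tsum_mul_right]
    gcongr with x
    exact one_sub_le_toMeasure_preimage_add_compl_of_notMem ρ B x.2
  have h' := ENNReal.toReal_mono (by finiteness) h
  rw [ENNReal.toReal_add (by finiteness) (by finiteness), ENNReal.toReal_mul, ENNReal.toReal_mul,
    ENNReal.toReal_sub_of_le prob_le_one ENNReal.one_ne_top, ENNReal.toReal_one] at h'
  simp only [← measureReal_def,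
    probReal_compl_eq_one_sub (μ := p.toMeasure) (.of_discrete)] at h' ⊢
  exact le_of_eq_of_le (by ring) h'

end Escape

end PMF

namespace Omega

def ball (M L : ℕ) : AddSubgroup (Omega M) :=
  (Finsupp.supported (ZMod M) (ZMod M) (Set.Iio L)).toAddSubgroup

theorem mem_ball {M L : ℕ} {x : Omega M} : x ∈ ball M L ↔ hnorm x ≤ L := by
  rw [ball, Submodule.mem_toAddSubgroup, Finsupp.mem_supported, hnorm, Finset.sup_le_iff]
  exact ⟨fun h i hi => h hi, fun h i hi => h i hi⟩

theorem compl_ball (M L : ℕ) : (↑(ball M L) : Set (Omega M))ᶜ = {y | L < hnorm y} := by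
  ext y
  simp [mem_ball]

theorem card_ball (M L : ℕ) [NeZero M] : Nat.card (ball M L) = M ^ L := by
  have e : ball M L ≃ (Set.Iio L → ZMod M) :=
    (Finsupp.supportedEquivFinsupp (R := ZMod M) (Set.Iio L)).toEquiv.trans
      Finsupp.equivFunOnFinite
  rw [Nat.card_congr e, Nat.card_fun]
  simp

instance (M L : ℕ) [NeZero M] : Finite (ball M L) :=
  Nat.finite_of_card_ne_zero (by rw [card_ball]; exact pow_ne_zero _ (NeZero.ne M))

theorem tsum_measureReal_ball_mul_one_sub {M : ℕ} [NeZero M] (p : PMF (Omega M)) (L : ℕ) :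
    ∑' u, p.toMeasure.real {x | hnorm (u + x) ≤ L} *
        (1 - p.toMeasure.real {x | hnorm (u + x) ≤ L}) =
      M ^ L * (p.map (QuotientAddGroup.mk : Omega M → Omega M ⧸ ball M L)).mismatchProb := by
  simp only [← mem_ball]
  rw [PMF.tsum_measureReal_add_mem_mul_one_sub, card_ball, Nat.cast_pow]

end Omega

section Walk

variable {M : ℕ} (ρ : PMF (Omega M)) (B : AddSubgroup (Omega M))

theorem walk_succ (k : ℕ) : walk ρ (k + 1) = (walk ρ k).bind fun x => ρ.map (x + ·) := rfl

theorem measureReal_walk_zero_compl : (walk ρ 0).toMeasure.real (↑B)ᶜ = 0 := by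
  simp [walk, measureReal_def, PMF.toMeasure_pure_apply _ _ (.of_discrete), B.zero_mem]

theorem measureReal_walk_compl_le (k : ℕ) :
    (walk ρ k).toMeasure.real (↑B)ᶜ ≤ k * ρ.toMeasure.real (↑B)ᶜ := by
  induction k with
  | zero => simp [measureReal_walk_zero_compl]
  | succ k ih =>
    rw [walk_succ]
    push_cast
    linarith [PMF.measureReal_bind_add_compl_le (walk ρ k) ρ B]

theorem sub_sq_le_measureReal_walk_compl (hδ : ρ.toMeasure.real (↑B)ᶜ ≤ 1 / 2) (k : ℕ) :
    k * ρ.toMeasure.real (↑B)ᶜ - (k * ρ.toMeasure.real (↑B)ᶜ) ^ 2 ≤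
      (walk ρ k).toMeasure.real (↑B)ᶜ := by
  set δ := ρ.toMeasure.real (↑B)ᶜ
  have hδ0 : 0 ≤ δ := measureReal_nonneg
  induction k with
  | zero => simp [measureReal_walk_zero_compl]
  | succ k ih =>
    have hstep := PMF.le_measureReal_bind_add_compl (walk ρ k) ρ B
    rw [walk_succ]
    push_cast
    nlinarith [mul_le_mul_of_nonneg_left ih (by linarith : (0 : ℝ) ≤ 1 - 2 * δ),
      mul_nonneg (sq_nonneg (k : ℝ)) (pow_nonneg hδ0 3)]

theorem mismatchProb_map_mk_walk_le (n : ℕ) :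
    ((walk ρ n).map (QuotientAddGroup.mk : Omega M → Omega M ⧸ B)).mismatchProb ≤
      2 * (n * ρ.toMeasure.real (↑B)ᶜ) := by
  have h := ((walk ρ n).map (QuotientAddGroup.mk : Omega M → Omega M ⧸ B)).mismatchProb_le
    ((0 : Omega M) : Omega M ⧸ B)
  rw [PMF.toReal_map_mk_zero, sub_sub_cancel] at h
  linarith [measureReal_walk_compl_le ρ B n]

theorem sub_sq_le_mismatchProb_map_mk_walk (n : ℕ) (hδ : ρ.toMeasure.real (↑B)ᶜ ≤ 1 / 2)
    (hnδ : n * ρ.toMeasure.real (↑B)ᶜ ≤ 1) :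
    2 * (n * ρ.toMeasure.real (↑B)ᶜ) - (2 * (n * ρ.toMeasure.real (↑B)ᶜ)) ^ 2 ≤
      ((walk ρ n).map (QuotientAddGroup.mk : Omega M → Omega M ⧸ B)).mismatchProb := by
  have h := ((walk ρ n).map
    (QuotientAddGroup.mk : Omega M → Omega M ⧸ B)).two_mul_mul_one_sub_le_mismatchProb
    ((0 : Omega M) : Omega M ⧸ B)
  rw [PMF.toReal_map_mk_zero, sub_sub_cancel] at h
  set x := n * ρ.toMeasure.real (↑B)ᶜ
  set e := (walk ρ n).toMeasure.real (↑B)ᶜ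
  have hx0 : 0 ≤ x := mul_nonneg n.cast_nonneg measureReal_nonneg
  have he_le : e ≤ x := measureReal_walk_compl_le ρ B n
  have hle_e : x - x ^ 2 ≤ e := sub_sq_le_measureReal_walk_compl ρ B hδ n
  have hprod : (1 - x) * (x - x ^ 2) ≤ (1 - e) * e :=
    mul_le_mul (by linarith) hle_e (by nlinarith) (by linarith)
  nlinarith [pow_nonneg hx0 3]

end Walk

theorem tendsto_measureReal_lt_atTop_zero {α : Type*} [MeasurableSpace α] (μ : Measure α)
    [IsFiniteMeasure μ] {f : α → ℕ} (hf : Measurable f) :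
    Tendsto (fun L : ℕ => μ.real {x | L < f x}) atTop (𝓝 0) := by
  have hempty : ⋂ L : ℕ, {x | L < f x} = ∅ :=
    Set.eq_empty_of_forall_notMem fun x hx => lt_irrefl (f x) (Set.mem_iInter.1 hx (f x))
  have h := tendsto_measure_iInter_atTop (μ := μ) (s := fun L : ℕ => {x | L < f x})
    (fun L => (hf measurableSet_Ioi).nullMeasurableSet)
    (fun i j hij x hx => lt_of_le_of_lt hij hx) ⟨0, measure_ne_top _ _⟩
  rw [hempty, measure_empty] at h
  exact (ENNReal.tendsto_toReal ENNReal.zero_ne_top).comp h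

theorem tendsto_div_self_of_sub_sq_le {ι : Type*} {l : Filter ι} {x y : ι → ℝ}
    (hx : Tendsto x l (𝓝 0)) (hpos : ∀ᶠ i in l, 0 < x i)
    (hlow : ∀ᶠ i in l, x i - x i ^ 2 ≤ y i) (hup : ∀ᶠ i in l, y i ≤ x i) :
    Tendsto (fun i => y i / x i) l (𝓝 1) := by
  have hlim : Tendsto (fun i => 1 - x i) l (𝓝 1) := by
    simpa using (tendsto_const_nhds (x := (1 : ℝ))).sub hx
  refine tendsto_of_tendsto_of_tendsto_of_le_of_le' hlim tendsto_const_nhds ?_ ?_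
  · filter_upwards [hpos, hlow] with i hi hlo
    rw [le_div_iff₀ hi]
    nlinarith
  · filter_upwards [hpos, hup] with i hi hhi
    rwa [div_le_one hi]

theorem number_variance_asymptotics_general (M : ℕ) (hM : 2 ≤ M)
    (ρ : PMF (Omega M))
    (hpos : ∀ L : ℕ, ρ.toMeasure {y : Omega M | L < hnorm y} ≠ 0)
    (n : ℕ) (hn : 1 ≤ n) :
    Tendsto (fun L : ℕ =>
        (∑' u : Omega M,
            ((walk ρ n).toMeasure {x : Omega M | hnorm (u + x) ≤ L}).toReal *
              (1 - ((walk ρ n).toMeasure {x : Omega M | hnorm (u + x) ≤ L}).toReal)) /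
          (2 * (n : ℝ) * (M : ℝ) ^ L * (ρ.toMeasure {y : Omega M | L < hnorm y}).toReal))
      atTop (nhds 1) := by
  have : NeZero M := ⟨by omega⟩
  have hM0 : (M : ℝ) ≠ 0 := by exact_mod_cast NeZero.ne M
  have hn0 : (0 : ℝ) < n := by exact_mod_cast hn
  have hδpos : ∀ L, 0 < ρ.toMeasure.real {y | L < hnorm y} := fun L =>
    ENNReal.toReal_pos (hpos L) (measure_ne_top _ _)
  have hδ := tendsto_measureReal_lt_atTop_zero ρ.toMeasure (f := hnorm) measurable_from_top
  have hnδ := hδ.const_mul (n : ℝ)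
  simp_rw [← measureReal_def, Omega.tsum_measureReal_ball_mul_one_sub, mul_zero,
    ← Omega.compl_ball] at hδpos hδ hnδ ⊢
  refine Tendsto.congr (fun L => ?_) (tendsto_div_self_of_sub_sq_le
    (x := fun L => 2 * (n * ρ.toMeasure.real (↑(Omega.ball M L))ᶜ))
    (y := fun L => ((walk ρ n).map (QuotientAddGroup.mk : _ → _ ⧸ Omega.ball M L)).mismatchProb)
    ?_ ?_ ?_ ?_)
  · field_simp
  · simpa using hnδ.const_mul 2
  · exact .of_forall fun L => by have := hδpos L; positivity
  · filter_upwards [hδ.eventually (eventually_le_nhds (by norm_num : (0 : ℝ) < 1 / 2)),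
      hnδ.eventually (eventually_le_nhds one_pos)] with L hδL hnδL
    exact sub_sq_le_mismatchProb_map_mk_walk ρ _ n hδL hnδL
  · exact .of_forall fun L => mismatchProb_map_mk_walk_le ρ _ n

/-- `Var N_n(L) ∼ 2 n M^L P(|ρ| > L)` as `L → ∞`, for fixed `n ≥ 1`. Here
`Var N_n(L) = Σ_u p_n^u(L) (1 - p_n^u(L))` with `p_n^u(L) = P(u + ξ_n ∈ B_L)`. -/
theorem number_variance_asymptotics (M : ℕ) (hM : 2 ≤ M) (r : ℕ → ℝ≥0∞)
    (hr : ∑' j : ℕ, r (j + 1) = 1)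
    (ρ : PMF (Omega M)) (hρ0 : ρ 0 = 0)
    (hρ : ∀ y : Omega M, y ≠ 0 →
      ρ y = r (hnorm y) / ((M : ℝ≥0∞) ^ (hnorm y - 1) * ((M : ℝ≥0∞) - 1)))
    (hpos : ∀ L : ℕ, ρ.toMeasure {y : Omega M | L < hnorm y} ≠ 0)
    (n : ℕ) (hn : 1 ≤ n) :
    Tendsto (fun L : ℕ =>
        (∑' u : Omega M,
            ((walk ρ n).toMeasure {x : Omega M | hnorm (u + x) ≤ L}).toReal *
              (1 - ((walk ρ n).toMeasure {x : Omega M | hnorm (u + x) ≤ L}).toReal)) /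
          (2 * (n : ℝ) * (M : ℝ) ^ L * (ρ.toMeasure {y : Omega M | L < hnorm y}).toReal))
      atTop (nhds 1) :=
  number_variance_asymptotics_general M hM ρ hpos n hn
end
end

section
/- For the system of independent r_j-random walks starting from each point of Ω_M, for all n, L ≥ 0: P(|ρ| ≤ L)^{2n−1} · n · P(|ρ| > L) · M^L ≤ Var N_n(L) ≤ 2 M^L. -/
open MeasureTheory Filter
open scoped ENNReal NNReal BigOperators Topology

noncomputable section

/-!
The ball `H = {x | hnorm x ≤ L}` is a subgroup of `Omega M` with `M ^ L` elements. Write `p u` for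
the probability that `u + X_n ∈ H`, where `X_n` is the walk after `n` steps. Translation invariance
gives `∑ p u = #H`, and `p u (1 - p u) ≤ p u` yields the upper bound. For `u ∈ H` we have
`p u = P(X_n ∈ H)`, which is at least `q ^ n` with `q = ρ H` (every step stays in `H`), while
`1 - p u = P(X_n ∉ H)` is at least `n (1 - q) q ^ (n - 1)` (exactly one step leaves `H`). Summing
over the `M ^ L` points of `H` gives the lower bound.
-/

section AddSubgroup

variable {G : Type*} [AddGroup G]

lemma AddSubgroup.preimage_add_left_of_mem (H : AddSubgroup G) {x : G} (hx : x ∈ H) :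
    (x + ·) ⁻¹' (H : Set G) = H :=
  Set.ext fun _ => H.add_mem_cancel_left hx

lemma AddSubgroup.subset_preimage_add_left_compl (H : AddSubgroup G) {x : G} (hx : x ∉ H) :
    (H : Set G) ⊆ (x + ·) ⁻¹' (H : Set G)ᶜ :=
  fun _ hy hxy => hx ((H.add_mem_cancel_right hy).1 hxy)

end AddSubgroup

section Translation

variable {G : Type*} [MeasurableSpace G] [DiscreteMeasurableSpace G]

lemma MeasureTheory.Measure.count_eq_tsum_indicator (S : Set G) :
    Measure.count S = ∑' u, S.indicator 1 u := by
  rw [← lintegral_indicator_one .of_discrete, lintegral_count]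

variable [AddGroup G]

lemma PMF.tsum_toMeasure_preimage_add_left (μ : PMF G) (S : Set G) :
    ∑' u, μ.toMeasure ((u + ·) ⁻¹' S) = Measure.count S := by
  simp_rw [PMF.toMeasure_apply μ .of_discrete]
  rw [ENNReal.tsum_comm]
  calc ∑' x, ∑' u, ((u + ·) ⁻¹' S).indicator μ x
      = ∑' x, μ x * ∑' u, S.indicator 1 (u + x) := by
        refine tsum_congr fun x => ?_
        rw [← ENNReal.tsum_mul_left]
        refine tsum_congr fun u => ?_
        by_cases h : u + x ∈ S
        · rw [Set.indicator_of_mem (s := (u + ·) ⁻¹' S) h, Set.indicator_of_mem h, Pi.one_apply,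
            mul_one]
        · rw [Set.indicator_of_notMem (s := (u + ·) ⁻¹' S) h, Set.indicator_of_notMem h, mul_zero]
    _ = ∑' x, μ x * Measure.count S := by
        refine tsum_congr fun x => ?_
        rw [Measure.count_eq_tsum_indicator]
        exact congrArg (μ x * ·) ((Equiv.addRight x).tsum_eq (S.indicator 1))
    _ = Measure.count S := by rw [ENNReal.tsum_mul_right, PMF.tsum_coe, one_mul]

lemma PMF.tsum_toMeasure_mul_one_sub_le_count (μ : PMF G) (S : Set G) :
    ∑' u, μ.toMeasure ((u + ·) ⁻¹' S) * (1 - μ.toMeasure ((u + ·) ⁻¹' S)) ≤ Measure.count S :=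
  (ENNReal.tsum_le_tsum fun _ => mul_le_of_le_one_right' tsub_le_self).trans_eq
    (μ.tsum_toMeasure_preimage_add_left S)

lemma PMF.count_mul_le_tsum_toMeasure_mul_one_sub (μ : PMF G) (H : AddSubgroup G) :
    Measure.count (H : Set G) * (μ.toMeasure H * (1 - μ.toMeasure H)) ≤
      ∑' u, μ.toMeasure ((u + ·) ⁻¹' (H : Set G)) *
        (1 - μ.toMeasure ((u + ·) ⁻¹' (H : Set G))) := by
  rw [Measure.count_eq_tsum_indicator, ← ENNReal.tsum_mul_right]
  refine ENNReal.tsum_le_tsum fun u => ?_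
  by_cases hu : u ∈ H
  · rw [Set.indicator_of_mem (SetLike.mem_coe.2 hu), Pi.one_apply, one_mul,
      H.preimage_add_left_of_mem hu]
  · rw [Set.indicator_of_notMem (mt SetLike.mem_coe.1 hu), zero_mul]
    exact zero_le

end Translation

section Ball

def hball (M L : ℕ) : AddSubgroup (Omega M) :=
  (Finsupp.supported (ZMod M) (ZMod M) (Finset.range L : Set ℕ)).toAddSubgroup

variable {M L : ℕ}

lemma mem_hball {x : Omega M} : x ∈ hball M L ↔ hnorm x ≤ L := by
  change x ∈ Finsupp.supported (ZMod M) (ZMod M) _ ↔ _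
  rw [Finsupp.mem_supported, Finset.coe_subset, hnorm, Finset.sup_le_iff]
  exact forall₂_congr fun _ _ => Finset.mem_range.trans Nat.lt_iff_add_one_le

lemma coe_hball : (hball M L : Set (Omega M)) = {x | hnorm x ≤ L} :=
  Set.ext fun _ => mem_hball

lemma count_hball [NeZero M] : Measure.count (hball M L : Set (Omega M)) = (M : ℝ≥0∞) ^ L := by
  let e : hball M L ≃ (↥(Finset.range L : Set ℕ) → ZMod M) :=
    (Finsupp.supportedEquivFinsupp (M := ZMod M) (R := ZMod M) _).toEquiv.trans
      Finsupp.equivFunOnFinite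
  rw [Measure.count_apply .of_discrete, Set.encard, SetLike.coe_sort_coe, ENat.card_congr e]
  simp

end Ball

section Walk

variable {M : ℕ} (ρ : PMF (Omega M))

lemma walk_succ_toMeasure (n : ℕ) (S : Set (Omega M)) :
    (walk ρ (n + 1)).toMeasure S = ∑' x, walk ρ n x * ρ.toMeasure ((x + ·) ⁻¹' S) := by
  rw [walk, PMF.toMeasure_bind_apply _ _ _ .of_discrete]
  refine tsum_congr fun x => ?_
  rw [PMF.toMeasure_map_apply _ _ _ .of_discrete .of_discrete]

lemma add_le_walk_succ_toMeasure {n : ℕ} {S T : Set (Omega M)} {a b : ℝ≥0∞}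
    (ha : ∀ x ∈ T, a ≤ ρ.toMeasure ((x + ·) ⁻¹' S))
    (hb : ∀ x ∉ T, b ≤ ρ.toMeasure ((x + ·) ⁻¹' S)) :
    (walk ρ n).toMeasure T * a + (walk ρ n).toMeasure Tᶜ * b ≤
      (walk ρ (n + 1)).toMeasure S := by
  rw [walk_succ_toMeasure, PMF.toMeasure_apply _ .of_discrete, PMF.toMeasure_apply _ .of_discrete,
    ← ENNReal.tsum_mul_right, ← ENNReal.tsum_mul_right, ← ENNReal.tsum_add]
  refine ENNReal.tsum_le_tsum fun x => ?_
  by_cases hx : x ∈ T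
  · rw [Set.indicator_of_mem hx, Set.indicator_of_notMem (Set.notMem_compl_iff.2 hx), zero_mul,
      add_zero]
    gcongr
    exact ha x hx
  · rw [Set.indicator_of_notMem hx, Set.indicator_of_mem (Set.mem_compl hx), zero_mul, zero_add]
    gcongr
    exact hb x hx

variable (H : AddSubgroup (Omega M))

lemma pow_le_walk_toMeasure (n : ℕ) : ρ.toMeasure H ^ n ≤ (walk ρ n).toMeasure H := by
  induction n with
  | zero =>
    rw [walk, PMF.toMeasure_pure_apply _ _ .of_discrete,
      if_pos (show (0 : Omega M) ∈ (H : Set _) from H.zero_mem), pow_zero]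
  | succ n ih =>
    calc ρ.toMeasure H ^ (n + 1)
        ≤ (walk ρ n).toMeasure H * ρ.toMeasure H + (walk ρ n).toMeasure (H : Set _)ᶜ * 0 := by
          rw [mul_zero, add_zero, pow_succ]
          gcongr
      _ ≤ (walk ρ (n + 1)).toMeasure H :=
          add_le_walk_succ_toMeasure ρ
            (fun x hx => measure_mono (H.preimage_add_left_of_mem hx).ge) fun _ _ => zero_le

lemma mul_pow_le_walk_toMeasure_compl (n : ℕ) :
    n * ρ.toMeasure (H : Set (Omega M))ᶜ * ρ.toMeasure H ^ (n - 1) ≤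
      (walk ρ n).toMeasure (H : Set (Omega M))ᶜ := by
  induction n with
  | zero => simp
  | succ n ih =>
    set q := ρ.toMeasure H
    set t := ρ.toMeasure (H : Set (Omega M))ᶜ
    calc ((n + 1 : ℕ) : ℝ≥0∞) * t * q ^ (n + 1 - 1)
        = q ^ n * t + n * t * q ^ (n - 1) * q := by
          rcases n with _ | n
          · norm_num
          · simp only [Nat.add_sub_cancel]; push_cast; ring
      _ ≤ (walk ρ n).toMeasure H * t + (walk ρ n).toMeasure (H : Set _)ᶜ * q := by
          gcongr
          exact pow_le_walk_toMeasure ρ H n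
      _ ≤ (walk ρ (n + 1)).toMeasure (H : Set (Omega M))ᶜ :=
          add_le_walk_succ_toMeasure ρ
            (fun x hx => by rw [Set.preimage_compl, H.preimage_add_left_of_mem hx])
            fun x hx => measure_mono (H.subset_preimage_add_left_compl hx)

end Walk

theorem number_variance_bounds_general (M : ℕ) (hM : 2 ≤ M) (ρ : PMF (Omega M)) (n L : ℕ) :
    (ρ.toMeasure {y : Omega M | hnorm y ≤ L}) ^ (2 * n - 1) * (n : ℝ≥0∞) *
        ρ.toMeasure {y : Omega M | L < hnorm y} * (M : ℝ≥0∞) ^ L ≤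
      (∑' u : Omega M,
        (walk ρ n).toMeasure {x : Omega M | hnorm (u + x) ≤ L} *
          (1 - (walk ρ n).toMeasure {x : Omega M | hnorm (u + x) ≤ L})) ∧
    (∑' u : Omega M,
        (walk ρ n).toMeasure {x : Omega M | hnorm (u + x) ≤ L} *
          (1 - (walk ρ n).toMeasure {x : Omega M | hnorm (u + x) ≤ L})) ≤
      2 * (M : ℝ≥0∞) ^ L := by
  have : NeZero M := ⟨by omega⟩
  have h_shift (u : Omega M) :
      {x : Omega M | hnorm (u + x) ≤ L} = (u + ·) ⁻¹' (hball M L : Set (Omega M)) := by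
    rw [coe_hball]
    rfl
  have h_out : {y : Omega M | L < hnorm y} = (hball M L : Set (Omega M))ᶜ := by
    ext
    simp [mem_hball]
  simp only [h_shift, h_out, ← coe_hball]
  set H := hball M L
  refine ⟨?_, ((walk ρ n).tsum_toMeasure_mul_one_sub_le_count H).trans ?_⟩
  · calc ρ.toMeasure H ^ (2 * n - 1) * n * ρ.toMeasure (H : Set (Omega M))ᶜ * (M : ℝ≥0∞) ^ L
        = Measure.count (H : Set (Omega M)) * (ρ.toMeasure H ^ n *
            (n * ρ.toMeasure (H : Set (Omega M))ᶜ * ρ.toMeasure H ^ (n - 1))) := by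
          rw [count_hball]
          rcases n with _ | n
          · simp
          · rw [show 2 * (n + 1) - 1 = (n + 1) + n by omega, pow_add, Nat.add_sub_cancel]
            ring
      _ ≤ Measure.count (H : Set (Omega M)) *
            ((walk ρ n).toMeasure H * (1 - (walk ρ n).toMeasure H)) := by
          rw [← prob_compl_eq_one_sub .of_discrete]
          gcongr
          · exact pow_le_walk_toMeasure ρ H n
          · exact mul_pow_le_walk_toMeasure_compl ρ H n
      _ ≤ _ := (walk ρ n).count_mul_le_tsum_toMeasure_mul_one_sub H
  · rw [count_hball]
    exact le_mul_of_one_le_left zero_le one_le_two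

/-- Two-sided bound for the number variance:
`P(|ρ| ≤ L)^{2n-1} · n · P(|ρ| > L) · M^L ≤ Var N_n(L) ≤ 2 M^L`. -/
theorem number_variance_bounds (M : ℕ) (hM : 2 ≤ M) (r : ℕ → ℝ≥0∞)
    (hr : ∑' j : ℕ, r (j + 1) = 1)
    (ρ : PMF (Omega M)) (hρ0 : ρ 0 = 0)
    (hρ : ∀ y : Omega M, y ≠ 0 →
      ρ y = r (hnorm y) / ((M : ℝ≥0∞) ^ (hnorm y - 1) * ((M : ℝ≥0∞) - 1)))
    (n L : ℕ) :
    (ρ.toMeasure {y : Omega M | hnorm y ≤ L}) ^ (2 * n - 1) * (n : ℝ≥0∞) *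
        ρ.toMeasure {y : Omega M | L < hnorm y} * (M : ℝ≥0∞) ^ L ≤
      (∑' u : Omega M,
        (walk ρ n).toMeasure {x : Omega M | hnorm (u + x) ≤ L} *
          (1 - (walk ρ n).toMeasure {x : Omega M | hnorm (u + x) ≤ L})) ∧
    (∑' u : Omega M,
        (walk ρ n).toMeasure {x : Omega M | hnorm (u + x) ≤ L} *
          (1 - (walk ρ n).toMeasure {x : Omega M | hnorm (u + x) ≤ L})) ≤
      2 * (M : ℝ≥0∞) ^ L :=
  number_variance_bounds_general M hM ρ n L
end
end

section
/- Under the assumption r_{j+1}/r_j → a ∈ (0,1] (with r_{j+1} ≤ r_j eventually), the tail h(n) = Σ_{j>n} r_j satisfies lim_{n→∞} r_{n+1}/h(n) = 1 − a. -/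
open Filter
open scoped Topology

noncomputable section

/-- The tail `h(L) = Σ_{j > L} r_j` of the step-length distribution. -/
def tailh (r : ℕ → ℝ) (L : ℕ) : ℝ := ∑' j : ℕ, r (L + 1 + j)

/-- If `r_{j+1}/r_j → a ∈ (0,1]` (with eventual monotonicity), then
`r_{n+1}/h(n) → 1 - a`. -/
theorem ratio_tail_limit (r : ℕ → ℝ) (a : ℝ) (ha0 : 0 < a) (ha1 : a ≤ 1)
    (hrpos : ∀ j : ℕ, 1 ≤ j → 0 < r j)
    (hsummable : Summable fun j : ℕ => r (j + 1))
    (hsum : ∑' j : ℕ, r (j + 1) = 1)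
    (j₀ : ℕ) (hmono : ∀ j : ℕ, j₀ ≤ j → r (j + 1) ≤ r j)
    (hratio : Tendsto (fun j : ℕ => r (j + 1) / r j) atTop (nhds a)) :
    Tendsto (fun n : ℕ => r (n + 1) / tailh r n) atTop (nhds (1 - a)) := by
  -- summability of each tail
  have hsum' : ∀ n : ℕ, Summable fun k : ℕ => r (n + 1 + k) := by
    intro n
    have h1 : Summable fun j : ℕ => r (j + n + 1) := (summable_nat_add_iff n).2 hsummable
    exact h1.congr (fun k => by ring_nf)
  have hpos : ∀ n : ℕ, 0 < tailh r n := by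
    intro n
    exact Summable.tsum_pos (hsum' n) (fun k => (hrpos _ (by omega)).le) 0 (hrpos _ (by omega))
  -- pointwise limits of ratios
  have hterm : ∀ k : ℕ, Tendsto (fun n : ℕ => r (n + 1 + k) / r (n + 1)) atTop (𝓝 (a ^ k)) := by
    intro k
    induction k with
    | zero =>
      simp only [Nat.add_zero, pow_zero]
      have : ∀ n : ℕ, r (n + 1 + 0) / r (n + 1) = 1 := fun n => by
        simp [div_self (hrpos (n + 1) (by omega)).ne']
      exact Tendsto.congr (fun n => (this n).symm) tendsto_const_nhds
    | succ k ih =>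
      have hshift : Tendsto (fun n : ℕ => r (n + 1 + k + 1) / r (n + 1 + k)) atTop (𝓝 a) := by
        have := hratio.comp (tendsto_add_atTop_nat (k + 1))
        exact this.congr (fun n => by norm_num [Function.comp]; ring_nf)
      have := hshift.mul ih
      rw [pow_succ, mul_comm (a ^ k) a] at *
      refine Tendsto.congr (fun n => ?_) this
      have h1 : r (n + 1 + k) ≠ 0 := (hrpos _ (by omega)).ne'
      field_simp
      ring
  -- case split on a = 1
  rcases eq_or_lt_of_le ha1 with rfl | halt
  · -- a = 1 : show h/r → ∞ hence r/h → 0 = 1 - 1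
    have hdiv : Tendsto (fun n : ℕ => tailh r n / r (n + 1)) atTop atTop := by
      rw [tendsto_atTop]
      intro C
      obtain ⟨K, hK⟩ := exists_nat_gt C
      -- eventually, each of first K terms ≥ 1/2... better: sum of first K terms → K
      have hfin : Tendsto (fun n : ℕ => ∑ k ∈ Finset.range K, r (n + 1 + k) / r (n + 1))
          atTop (𝓝 (K : ℝ)) := by
        have := tendsto_finset_sum (Finset.range K) (fun k _ => hterm k)
        simpa using this
      have hev : ∀ᶠ n in atTop, C ≤ ∑ k ∈ Finset.range K, r (n + 1 + k) / r (n + 1) :=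
        hfin.eventually (eventually_ge_nhds (by linarith))
      filter_upwards [hev] with n hn
      refine hn.trans ?_
      have hr1 : 0 < r (n + 1) := hrpos _ (by omega)
      rw [tailh, ← tsum_div_const]
      exact Summable.sum_le_tsum (Finset.range K)
        (fun k _ => div_nonneg (hrpos _ (by omega)).le (hrpos _ (by omega)).le)
        ((hsum' n).div_const _)
    have : Tendsto (fun n : ℕ => r (n + 1) / tailh r n) atTop (𝓝 0) := by
      have := hdiv.inv_tendsto_atTop
      refine this.congr (fun n => ?_)
      simp only [Pi.inv_apply, inv_div]
    simpa using this
  · -- a < 1 : dominated convergence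
    set b : ℝ := (a + 1) / 2 with hb
    have hab : a < b := by rw [hb]; linarith
    have hb1 : b < 1 := by rw [hb]; linarith
    have hb0 : 0 < b := by rw [hb]; linarith
    have hev : ∀ᶠ j in atTop, r (j + 1) / r j ≤ b := hratio.eventually_le_const hab
    obtain ⟨N, hN⟩ := hev.exists_forall_of_atTop
    have hbound : ∀ n : ℕ, N + 1 ≤ n → ∀ k : ℕ, r (n + 1 + k) ≤ b ^ k * r (n + 1) := by
      intro n hn k
      induction k with
      | zero => simp
      | succ k ih =>
        have hrk : 0 < r (n + 1 + k) := hrpos _ (by omega)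
        have h2 : r (n + 1 + k + 1) ≤ b * r (n + 1 + k) := by
          have := hN (n + 1 + k) (by omega)
          rw [div_le_iff₀ hrk] at this
          exact this
        calc r (n + 1 + (k + 1)) = r (n + 1 + k + 1) := by ring_nf
          _ ≤ b * r (n + 1 + k) := h2
          _ ≤ b * (b ^ k * r (n + 1)) := by nlinarith
          _ = b ^ (k + 1) * r (n + 1) := by ring
    have hdc : Tendsto (fun n : ℕ => ∑' k : ℕ, r (n + 1 + k) / r (n + 1)) atTop
        (𝓝 (∑' k : ℕ, a ^ k)) := by
      apply tendsto_tsum_of_dominated_convergence (bound := fun k => b ^ k)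
        (summable_geometric_of_lt_one hb0.le hb1) hterm
      filter_upwards [eventually_ge_atTop (N + 1)] with n hn k
      have hr1 : 0 < r (n + 1) := hrpos _ (by omega)
      rw [Real.norm_eq_abs,
        abs_of_nonneg (div_nonneg (hrpos _ (by omega)).le hr1.le), div_le_iff₀ hr1]
      exact hbound n hn k
    rw [tsum_geometric_of_lt_one ha0.le halt] at hdc
    have hdc' : Tendsto (fun n : ℕ => tailh r n / r (n + 1)) atTop (𝓝 (1 - a)⁻¹) := by
      refine hdc.congr (fun n => ?_)
      rw [tailh, ← tsum_div_const]
    have hne : (1 - a)⁻¹ ≠ 0 := inv_ne_zero (by linarith)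
    have := hdc'.inv₀ hne
    rw [inv_inv] at this
    refine this.congr (fun n => ?_)
    rw [inv_div]
end
end

section
/- With h(L) = Σ_{j>L} r_j and L(n) = sup{L : h(L) ≥ 1/n}, under the assumption r_{j+1}/r_j → a ∈ (0,1] (with eventual monotonicity), one has 1 ≤ n·h(L(n)) for all n and limsup_{n→∞} n·h(L(n)) ≤ 1/a. In particular if a = 1, then lim_{n→∞} n·h(L(n)) = 1. -/
open Filter
open scoped Topology

noncomputable section

/-- `L(n) = sup {L ∈ ℤ_+ : h(L) ≥ 1/n}`. -/
def Lscale (r : ℕ → ℝ) (n : ℕ) : ℕ := sSup {L : ℕ | 1 / (n : ℝ) ≤ tailh r L}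

/-!
Since `L = L(n)` is the last index with `h(L) ≥ 1/n`, we have `1/n ≤ h(L)` and `h(L + 1) < 1/n`,
so `1 ≤ n h(L(n)) < h(L(n)) / h(L(n) + 1)`. The ratio test transfers from the terms to the tails:
`h(L + 1) / h(L) → a`. As `L(n) → ∞`, the upper bound tends to `1/a`.
-/

section Tails

variable {r : ℕ → ℝ}

theorem summable_tailh_terms (hs : Summable fun j : ℕ => r (j + 1)) (L : ℕ) :
    Summable fun j : ℕ => r (L + 1 + j) :=
  ((summable_nat_add_iff L).mpr hs).congr fun j => congrArg r (by omega)

theorem tailh_pos (hrpos : ∀ j : ℕ, 1 ≤ j → 0 < r j)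
    (hs : Summable fun j : ℕ => r (j + 1)) (L : ℕ) : 0 < tailh r L :=
  (summable_tailh_terms hs L).tsum_pos (fun j => (hrpos _ (by omega)).le) 0 (hrpos _ (by omega))

theorem tailh_zero (hsum : ∑' j : ℕ, r (j + 1) = 1) : tailh r 0 = 1 := by
  simpa only [tailh, zero_add, add_comm 1] using hsum

theorem tendsto_tailh_atTop (r : ℕ → ℝ) : Tendsto (tailh r) atTop (𝓝 0) :=
  ((tendsto_sum_nat_add r).comp (tendsto_add_atTop_nat 1)).congr fun L =>
    tsum_congr fun j => congrArg r (show j + (L + 1) = L + 1 + j by omega)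

theorem tailh_succ_lt_mul (hs : Summable fun j : ℕ => r (j + 1)) {L : ℕ} {c : ℝ}
    (h : ∀ m, L < m → r (m + 1) < c * r m) : tailh r (L + 1) < c * tailh r L := by
  have hlt : ∀ j, r (L + 1 + 1 + j) < c * r (L + 1 + j) := fun j => by
    simpa only [show L + 1 + j + 1 = L + 1 + 1 + j by omega] using h (L + 1 + j) (by omega)
  rw [tailh, tailh, ← tsum_mul_left]
  exact Summable.tsum_lt_tsum (fun j => (hlt j).le) (hlt 0) (summable_tailh_terms hs (L + 1))
    ((summable_tailh_terms hs L).mul_left c)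

theorem mul_tailh_lt_tailh_succ (hs : Summable fun j : ℕ => r (j + 1)) {L : ℕ} {c : ℝ}
    (h : ∀ m, L < m → c * r m < r (m + 1)) : c * tailh r L < tailh r (L + 1) := by
  have hlt : ∀ j, c * r (L + 1 + j) < r (L + 1 + 1 + j) := fun j => by
    simpa only [show L + 1 + j + 1 = L + 1 + 1 + j by omega] using h (L + 1 + j) (by omega)
  rw [tailh, tailh, ← tsum_mul_left]
  exact Summable.tsum_lt_tsum (fun j => (hlt j).le) (hlt 0)
    ((summable_tailh_terms hs L).mul_left c) (summable_tailh_terms hs (L + 1))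

theorem tendsto_tailh_succ_div_tailh (hrpos : ∀ j : ℕ, 1 ≤ j → 0 < r j)
    (hs : Summable fun j : ℕ => r (j + 1)) {a : ℝ}
    (hratio : Tendsto (fun j : ℕ => r (j + 1) / r j) atTop (𝓝 a)) :
    Tendsto (fun L : ℕ => tailh r (L + 1) / tailh r L) atTop (𝓝 a) := by
  rw [tendsto_order] at hratio ⊢
  constructor
  · intro c hc
    obtain ⟨N, hN⟩ := eventually_atTop.mp (hratio.1 c hc)
    filter_upwards [eventually_ge_atTop N] with L hL
    refine (lt_div_iff₀ (tailh_pos hrpos hs L)).mpr (mul_tailh_lt_tailh_succ hs fun m hm => ?_)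
    exact (lt_div_iff₀ (hrpos m (by omega))).mp (hN m (by omega))
  · intro c hc
    obtain ⟨N, hN⟩ := eventually_atTop.mp (hratio.2 c hc)
    filter_upwards [eventually_ge_atTop N] with L hL
    refine (div_lt_iff₀ (tailh_pos hrpos hs L)).mpr ?_
    exact tailh_succ_lt_mul (L := L) hs fun m hm =>
      (div_lt_iff₀ (hrpos m (by omega))).mp (hN m (by omega))

theorem bddAbove_setOf_le_tailh {n : ℕ} (hn : 1 ≤ n) :
    BddAbove {L : ℕ | 1 / (n : ℝ) ≤ tailh r L} := by
  obtain ⟨N, hN⟩ := eventually_atTop.mp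
    ((tendsto_tailh_atTop r).eventually_lt_const (by positivity : (0 : ℝ) < 1 / n))
  exact ⟨N, fun L hL => le_of_not_gt fun hNL => (hN L hNL.le).not_ge hL⟩

theorem le_tailh_Lscale (hsum : ∑' j : ℕ, r (j + 1) = 1) {n : ℕ} (hn : 1 ≤ n) :
    1 / (n : ℝ) ≤ tailh r (Lscale r n) := by
  refine Nat.sSup_mem ⟨0, ?_⟩ (bddAbove_setOf_le_tailh hn)
  rw [Set.mem_ofPred_eq, tailh_zero hsum, div_le_one (by positivity)]
  exact_mod_cast hn

theorem tailh_Lscale_succ_lt {n : ℕ} (hn : 1 ≤ n) : tailh r (Lscale r n + 1) < 1 / (n : ℝ) :=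
  lt_of_not_ge fun h => (le_csSup (bddAbove_setOf_le_tailh hn) h).not_gt (Nat.lt_succ_self _)

theorem tendsto_Lscale_atTop (hrpos : ∀ j : ℕ, 1 ≤ j → 0 < r j)
    (hs : Summable fun j : ℕ => r (j + 1)) : Tendsto (Lscale r) atTop atTop := by
  refine Filter.tendsto_atTop.mpr fun L => ?_
  have hL := tailh_pos hrpos hs L
  filter_upwards [eventually_ge_atTop 1, eventually_ge_atTop ⌈1 / tailh r L⌉₊] with n hn hceil
  refine le_csSup (bddAbove_setOf_le_tailh hn) ?_
  rw [Set.mem_ofPred_eq, div_le_iff₀ (by positivity), ← div_le_iff₀' hL]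
  exact (Nat.le_ceil _).trans (by exact_mod_cast hceil)

theorem mul_tailh_Lscale_lt_div {n : ℕ} (hrpos : ∀ j : ℕ, 1 ≤ j → 0 < r j)
    (hs : Summable fun j : ℕ => r (j + 1)) (hn : 1 ≤ n) :
    (n : ℝ) * tailh r (Lscale r n) < tailh r (Lscale r n) / tailh r (Lscale r n + 1) := by
  have hsucc : (n : ℝ) * tailh r (Lscale r n + 1) < 1 :=
    (lt_div_iff₀' (by positivity)).mp (tailh_Lscale_succ_lt hn)
  rw [lt_div_iff₀ (tailh_pos hrpos hs _)]
  calc (n : ℝ) * tailh r (Lscale r n) * tailh r (Lscale r n + 1)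
      = tailh r (Lscale r n) * ((n : ℝ) * tailh r (Lscale r n + 1)) := by ring
    _ < tailh r (Lscale r n) := mul_lt_of_lt_one_right (tailh_pos hrpos hs _) hsucc

end Tails

theorem n_tail_Lscale_general (r : ℕ → ℝ) (a : ℝ) (ha0 : 0 < a)
    (hrpos : ∀ j : ℕ, 1 ≤ j → 0 < r j)
    (hsummable : Summable fun j : ℕ => r (j + 1))
    (hsum : ∑' j : ℕ, r (j + 1) = 1)
    (hratio : Tendsto (fun j : ℕ => r (j + 1) / r j) atTop (nhds a)) :
    (∀ n : ℕ, 1 ≤ n → 1 ≤ (n : ℝ) * tailh r (Lscale r n)) ∧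
    Filter.limsup (fun n : ℕ => (n : ℝ) * tailh r (Lscale r n)) atTop ≤ 1 / a ∧
    (a = 1 → Tendsto (fun n : ℕ => (n : ℝ) * tailh r (Lscale r n)) atTop (nhds 1)) := by
  have hlower : ∀ n : ℕ, 1 ≤ n → 1 ≤ (n : ℝ) * tailh r (Lscale r n) := fun n hn => by
    have := le_tailh_Lscale hsum hn
    rwa [div_le_iff₀' (by positivity)] at this
  have hbound : Tendsto (fun n => tailh r (Lscale r n) / tailh r (Lscale r n + 1)) atTop
      (𝓝 (1 / a)) := by
    have := ((tendsto_tailh_succ_div_tailh hrpos hsummable hratio).inv₀ ha0.ne').comp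
      (tendsto_Lscale_atTop hrpos hsummable)
    simpa only [Function.comp_def, inv_div, one_div] using this
  have hlower_ev := eventually_atTop.mpr ⟨1, hlower⟩
  have hupper := eventually_atTop.mpr
    ⟨1, fun n hn => (mul_tailh_Lscale_lt_div hrpos hsummable hn).le⟩
  refine ⟨hlower, ?_, fun ha => ?_⟩
  · rw [← hbound.limsup_eq]
    exact limsup_le_limsup hupper (isBoundedUnder_of_eventually_ge hlower_ev).isCoboundedUnder_le
      hbound.isBoundedUnder_le
  · subst ha
    exact tendsto_of_tendsto_of_tendsto_of_le_of_le' tendsto_const_nhds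
      (by simpa only [div_one] using hbound) hlower_ev hupper

/-- `1 ≤ n h(L(n))` for all `n ≥ 1`, `limsup_n n h(L(n)) ≤ 1/a`, and if `a = 1` then
`n h(L(n)) → 1`. -/
theorem n_tail_Lscale (r : ℕ → ℝ) (a : ℝ) (ha0 : 0 < a) (ha1 : a ≤ 1)
    (hrpos : ∀ j : ℕ, 1 ≤ j → 0 < r j)
    (hsummable : Summable fun j : ℕ => r (j + 1))
    (hsum : ∑' j : ℕ, r (j + 1) = 1)
    (j₀ : ℕ) (hmono : ∀ j : ℕ, j₀ ≤ j → r (j + 1) ≤ r j)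
    (hratio : Tendsto (fun j : ℕ => r (j + 1) / r j) atTop (nhds a)) :
    (∀ n : ℕ, 1 ≤ n → 1 ≤ (n : ℝ) * tailh r (Lscale r n)) ∧
    Filter.limsup (fun n : ℕ => (n : ℝ) * tailh r (Lscale r n)) atTop ≤ 1 / a ∧
    (a = 1 → Tendsto (fun n : ℕ => (n : ℝ) * tailh r (Lscale r n)) atTop (nhds 1)) :=
  n_tail_Lscale_general r a ha0 hrpos hsummable hsum hratio
end
end
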